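/- arXiv:1703.03049 — 2 statements merged into one kernel-verified Lean document; each statement's English description precedes it below -/
import Mathlib

section
/- In the Milnor-Witt K-theory ring K^MW_*(F) of a field F, for all units u, v in F^×, one has [u][v] = ε[v][u], where ε = -⟨-1⟩ = -(1 + η[-1]). -/
/-- A presentation of the Milnor–Witt K-theory ring `K^MW_*(F)` of a field `F`:
a ring `R` generated by symbols `[u]` (for `u ∈ Fˣ`, here `sym u`) and `η` (here `eta`),
subject to the Milnor–Witt relations:
`η[u] = [u]η`; `[u][1-u] = 0`; `[uv] = [u] + [v] + η[u][v]`; `η(2 + η[-1]) = 0`. -/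
structure MilnorWittPresentation (F : Type*) [Field F] (R : Type*) [Ring R] where
  sym : Fˣ → R
  eta : R
  eta_comm : ∀ u : Fˣ, eta * sym u = sym u * eta
  steinberg : ∀ u v : Fˣ, (u : F) + (v : F) = 1 → sym u * sym v = 0
  sym_mul : ∀ u v : Fˣ, sym (u * v) = sym u + sym v + eta * sym u * sym v
  eta_hyperbolic : eta * (2 + eta * sym (-1)) = 0
  generates : Subring.closure (Set.range sym ∪ {eta}) = ⊤

/-- The element `⟨u⟩ := 1 + η[u]` of the Milnor–Witt K-theory ring. -/
def MilnorWittPresentation.form {F : Type*} [Field F] {R : Type*} [Ring R]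
    (P : MilnorWittPresentation F R) (u : Fˣ) : R :=
  1 + P.eta * P.sym u

/-!
Everything follows from the Steinberg relation through one observation: if `[x][y] = 0` then
`[x][yz] = [x][z]`, because the correction term `η[x][y][z]` of `[yz]` vanishes (`η` commutes
with `[x]`). Writing `1 - u = (1 - u⁻¹)(-u)` gives `[u][-u] = 0`, and then `-(uv) = (-u)v = (-v)u`
gives `[u][-uv] = [u][v]` and `[v][-uv] = [v][u]`. Expanding `0 = [uv][-uv]` with
`[uv] = [u] + [v] + η[u][v]` yields `[u][v] + [v][u] + η[u][v][u] = 0`, and the last term equals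
`η[-1][v][u]` since `[u][u] = [u][-1]` and `η[x][y]` is symmetric in `x, y`.
-/

namespace MilnorWittPresentation

variable {F : Type*} [Field F] {R : Type*} [Ring R] (P : MilnorWittPresentation F R)

lemma eta_mul_sym_one : P.eta * P.sym 1 = 0 := by
  have h := P.sym_mul (-1) (-1)
  rw [neg_one_mul, neg_neg] at h
  linear_combination (norm := noncomm_ring) P.eta * h + P.eta_hyperbolic * P.sym (-1)

lemma sym_one : P.sym 1 = 0 := by
  have h := P.sym_mul 1 1
  rw [mul_one] at h
  linear_combination (norm := noncomm_ring) -h - P.eta_mul_sym_one * P.sym 1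

lemma eta_mul_sym_mul_sym_comm (x y : Fˣ) :
    P.eta * (P.sym x * P.sym y) = P.eta * (P.sym y * P.sym x) := by
  have h := P.sym_mul x y
  rw [mul_comm, P.sym_mul] at h
  linear_combination (norm := noncomm_ring) -h

lemma sym_mul_eq_zero_of_sym_inv_mul_eq_zero {u : Fˣ} {r : R} (h : P.sym u⁻¹ * r = 0) :
    P.sym u * r = 0 := by
  have hinv := P.sym_mul u u⁻¹
  rw [mul_inv_cancel, P.sym_one] at hinv
  linear_combination (norm := noncomm_ring) -hinv * r - h - P.eta * P.sym u * h

lemma sym_mul_sym_mul_of_sym_mul_sym_eq_zero {x y : Fˣ} (h : P.sym x * P.sym y = 0) (z : Fˣ) :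
    P.sym x * P.sym (y * z) = P.sym x * P.sym z := by
  rw [P.sym_mul]
  linear_combination (norm := noncomm_ring)
    h + (P.eta_comm x).symm * (P.sym y * P.sym z) + P.eta * h * P.sym z

lemma sym_mul_sym_neg_self (u : Fˣ) : P.sym u * P.sym (-u) = 0 := by
  by_cases hu : u = 1
  · rw [hu, P.sym_one, zero_mul]
  have hu' : (u : F) ≠ 1 := fun h => hu (Units.ext h)
  let a : Fˣ := Units.mk0 (1 - u) (sub_ne_zero.mpr hu'.symm)
  let b : Fˣ := Units.mk0 (1 - u⁻¹) (sub_ne_zero.mpr (by simpa [eq_comm] using hu'))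
  have hub : P.sym u * P.sym b = 0 :=
    P.sym_mul_eq_zero_of_sym_inv_mul_eq_zero (P.steinberg u⁻¹ b (by simp [b]))
  have hab : a = b * -u := by
    ext
    simp [a, b, sub_mul, Units.ne_zero]
  rw [← P.sym_mul_sym_mul_of_sym_mul_sym_eq_zero hub, ← hab]
  exact P.steinberg u a (by simp [a])

lemma sym_mul_sym_neg_mul (u v : Fˣ) : P.sym u * P.sym (-(u * v)) = P.sym u * P.sym v := by
  rw [← neg_mul]
  exact P.sym_mul_sym_mul_of_sym_mul_sym_eq_zero (P.sym_mul_sym_neg_self u) v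

lemma sym_mul_sym_self (u : Fˣ) : P.sym u * P.sym u = P.sym u * P.sym (-1) := by
  simpa using P.sym_mul_sym_neg_mul u (-1)

lemma eta_mul_sym_mul_sym_mul_sym_self (u v : Fˣ) :
    P.eta * (P.sym u * P.sym v * P.sym u) = P.eta * (P.sym (-1) * P.sym v * P.sym u) := by
  calc P.eta * (P.sym u * P.sym v * P.sym u)
      = P.sym u * (P.eta * (P.sym v * P.sym u)) := by
        linear_combination (norm := noncomm_ring) P.eta_comm u * (P.sym v * P.sym u)
    _ = P.eta * (P.sym u * P.sym u) * P.sym v := by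
        rw [P.eta_mul_sym_mul_sym_comm]
        linear_combination (norm := noncomm_ring) -P.eta_comm u * (P.sym u * P.sym v)
    _ = P.sym (-1) * (P.eta * (P.sym u * P.sym v)) := by
        rw [P.sym_mul_sym_self, P.eta_mul_sym_mul_sym_comm u]
        linear_combination (norm := noncomm_ring) P.eta_comm (-1) * (P.sym u * P.sym v)
    _ = P.eta * (P.sym (-1) * P.sym v * P.sym u) := by
        rw [P.eta_mul_sym_mul_sym_comm]
        linear_combination (norm := noncomm_ring) -P.eta_comm (-1) * (P.sym v * P.sym u)

end MilnorWittPresentation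

/-- In `K^MW_*(F)`, for all units `u, v`, one has `[u][v] = ε[v][u]` where
`ε = -⟨-1⟩ = -(1 + η[-1])`. -/
theorem statement2 {F : Type*} [Field F] {R : Type*} [Ring R]
    (P : MilnorWittPresentation F R) (u v : Fˣ) :
    P.sym u * P.sym v = (-(P.form (-1))) * (P.sym v * P.sym u) := by
  have hzero := P.sym_mul_sym_neg_self (u * v)
  have hu := P.sym_mul_sym_neg_mul u v
  have hv := P.sym_mul_sym_neg_mul v u
  rw [mul_comm v u] at hv
  rw [P.sym_mul] at hzero
  have hcube := P.eta_mul_sym_mul_sym_mul_sym_self u v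
  rw [MilnorWittPresentation.form]
  linear_combination (norm := noncomm_ring)
    hzero - hu - hv - P.eta * P.sym u * hv - hcube
end

section
/- Let k be a field of characteristic ≠ 2 and m ≥ 2 an integer coprime to char k, a, b ∈ k^×, and A = k[T]/(T^m + b/a). Then the trace form Tr_{A/k}(x²) is: ⟨m⟩ + ((m-1)/2)·h in GW(k) if m is odd, and ⟨m⟩ + ⟨-mab⟩ + ((m-2)/2)·h if m is even. -/
/-!
Write `θ` for the class of `X` in `A = k[X]/(X ^ m + c)`. In the basis `1, θ, …, θ ^ (m - 1)`,
`Tr(θ ^ n)` vanishes unless `m ∣ n`, and then equals `m (-c) ^ (n / m)`. Hence for exponents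
below `m` the trace form pairs `θ ^ i` with `θ ^ j` only when `i + j ∈ {0, m}`: the line `k · 1`
is `⟨m⟩`, each plane spanned by `θ ^ p, θ ^ (m - p)` with `0 < 2p < m` is hyperbolic, and for even
`m` the line `k · θ ^ (m / 2)` is `⟨-mc⟩`. With `c = b / a`, rescaling `θ ^ (m / 2)` by `a`
turns `⟨-mc⟩` into `⟨-mab⟩`.
-/

open Polynomial

theorem LinearMap.BilinForm.IsSymm.apply_eq_ite_of_le {R M ι : Type*} [CommSemiring R]
    [AddCommMonoid M] [Module R M] [LinearOrder ι] {B : LinearMap.BilinForm R M} (hB : B.IsSymm)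
    {v : ι → M} {w : ι → R} (hv : ∀ i j, i ≤ j → B (v i) (v j) = if i = j then w i else 0)
    (i j : ι) : B (v i) (v j) = if i = j then w i else 0 := by
  rcases le_total i j with hij | hji
  · exact hv i j hij
  · rw [hB.eq, hv j i hji]
    by_cases h : i = j
    · subst h; rfl
    · rw [if_neg h, if_neg (Ne.symm h)]

theorem LinearMap.BilinForm.equivalent_weightedSumSquares_of_apply_eq_ite {K V ι : Type*}
    [Field K] [Invertible (2 : K)] [AddCommGroup V] [Module K V] [FiniteDimensional K V]
    [Fintype ι] [DecidableEq ι] {B : LinearMap.BilinForm K V} (hB : B.IsSymm) {v : ι → V}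
    {w : ι → K} (hv : ∀ i j, B (v i) (v j) = if i = j then w i else 0) (hw : ∀ i, w i ≠ 0)
    (hcard : Fintype.card ι = Module.finrank K V) :
    B.toQuadraticMap.Equivalent (QuadraticMap.weightedSumSquares K w) := by
  have hvw (i) : B (v i) (v i) = w i := by simp [hv]
  have hortho : B.iIsOrtho v := iIsOrtho_def.mpr fun i j hij => by simp [hv, hij]
  let bs := basisOfLinearIndependentOfCardEqFinrank' v
    (linearIndependent_of_iIsOrtho hortho fun i => hvw i ▸ hw i) hcard
  have hbs : ⇑bs = v := by simp [bs]
  have hbs_ortho : (QuadraticMap.associated (R := K) B.toQuadraticMap).IsOrthoᵢ bs := by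
    rwa [QuadraticMap.associated_left_inverse K hB.eq, hbs]
  have hwsq : QuadraticMap.weightedSumSquares K w
      = QuadraticMap.weightedSumSquares K fun i => B.toQuadraticMap (bs i) := by
    simp [hbs, hvw]
  rw [hwsq, ← QuadraticMap.basisRepr_eq_of_iIsOrtho _ _ hbs_ortho]
  exact ⟨QuadraticMap.isometryEquivBasisRepr _ bs⟩

theorem Algebra.traceForm_equivalent_of_algEquiv {R A B : Type*} [CommRing R] [CommRing A]
    [CommRing B] [Algebra R A] [Algebra R B] (e : A ≃ₐ[R] B) :
    (Algebra.traceForm R A).toQuadraticMap.Equivalent (Algebra.traceForm R B).toQuadraticMap :=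
  ⟨⟨e.toLinearEquiv, fun x => by simp [← map_mul, Algebra.trace_eq_of_algEquiv]⟩⟩

namespace AdjoinRoot

variable {k : Type*} [Field k] {m : ℕ}

section

variable (c : k)

theorem root_X_pow_add_C_pow (n : ℕ) :
    root (X ^ m + C c) ^ n = (-c) ^ (n / m) • root (X ^ m + C c) ^ (n % m) := by
  have hroot : root (X ^ m + C c) ^ m = algebraMap k _ (-c) := by
    have h := eval₂_root (X ^ m + C c)
    simp only [eval₂_add, eval₂_pow, eval₂_X, eval₂_C] at h
    rw [map_neg, algebraMap_eq, eq_neg_of_add_eq_zero_left h]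
  conv_lhs => rw [← Nat.div_add_mod n m, pow_add, pow_mul, hroot, ← map_pow, ← Algebra.smul_def]

theorem powerBasis_X_pow_add_C_dim (hm : 0 < m) :
    (powerBasis (X_pow_add_C_ne_zero hm c)).dim = m :=
  natDegree_X_pow_add_C

theorem finrank_X_pow_add_C (hm : 0 < m) : Module.finrank k (AdjoinRoot (X ^ m + C c)) = m := by
  rw [(powerBasis (X_pow_add_C_ne_zero hm c)).finrank, powerBasis_X_pow_add_C_dim c hm]

theorem repr_root_X_pow_add_C_pow (hm : 0 < m) (n : ℕ)
    (i : Fin (powerBasis (X_pow_add_C_ne_zero hm c)).dim) :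
    (powerBasis (X_pow_add_C_ne_zero hm c)).basis.repr (root (X ^ m + C c) ^ n) i
      = if n % m = i then (-c) ^ (n / m) else 0 := by
  have hlt : n % m < (powerBasis (X_pow_add_C_ne_zero hm c)).dim :=
    (powerBasis_X_pow_add_C_dim c hm).symm ▸ Nat.mod_lt _ hm
  have hb : root (X ^ m + C c) ^ (n % m)
      = (powerBasis (X_pow_add_C_ne_zero hm c)).basis ⟨_, hlt⟩ := by
    simp [PowerBasis.coe_basis]
  rw [root_X_pow_add_C_pow, hb, map_smul, Module.Basis.repr_self]
  simp [Finsupp.single_apply, Fin.ext_iff]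

theorem trace_root_X_pow_add_C_pow (hm : 0 < m) (n : ℕ) :
    Algebra.trace k _ (root (X ^ m + C c) ^ n)
      = if m ∣ n then (m : k) * (-c) ^ (n / m) else 0 := by
  set pb := powerBasis (X_pow_add_C_ne_zero hm c)
  have hdiag (i : Fin pb.dim) :
      (Algebra.leftMulMatrix pb.basis (root (X ^ m + C c) ^ n)).diag i
        = if m ∣ n then (-c) ^ (n / m) else 0 := by
    have hi : (i : ℕ) < m := i.2.trans_eq (powerBasis_X_pow_add_C_dim c hm)
    have hmod : (n + i) % m = i ↔ m ∣ n := by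
      rw [← Nat.add_modEq_right_iff, Nat.ModEq, Nat.mod_eq_of_lt hi]
    rw [Matrix.diag_apply, Algebra.leftMulMatrix_eq_repr_mul, PowerBasis.coe_basis]
    simp only [pb, powerBasis_gen, ← pow_add, repr_root_X_pow_add_C_pow c hm, hmod]
    split_ifs with hn
    · rw [Nat.add_div_of_dvd_right hn, Nat.div_eq_of_lt hi, add_zero]
    · rfl
  rw [Algebra.trace_eq_matrix_trace pb.basis, Matrix.trace,
    Finset.sum_congr rfl fun i _ => hdiag i]
  split_ifs <;> simp [pb]

theorem traceForm_root_pow_root_pow (hm : 0 < m) {i j : ℕ} (h : i + j < 2 * m) :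
    Algebra.traceForm k _ (root (X ^ m + C c) ^ i) (root (X ^ m + C c) ^ j)
      = if i + j = 0 then (m : k) else if i + j = m then -(m * c) else 0 := by
  rw [Algebra.traceForm_apply, ← pow_add, trace_root_X_pow_add_C_pow c hm]
  by_cases h0 : i + j = 0
  · simp [h0]
  by_cases hm' : i + j = m
  · simp [hm', Nat.div_self hm, hm.ne']
  have hdvd : ¬ m ∣ i + j := by
    rintro ⟨_ | _ | q, hq⟩
    · exact h0 hq
    · exact hm' (hq.trans (mul_one m))
    · nlinarith
  rw [if_neg hdvd, if_neg h0, if_neg hm']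

end

/-- `θ ^ p` and `θ ^ (m - p)` are isotropic and pair to `-(m * c)`, so this vector of the
plane they span has square `s`. -/
noncomputable def hyperbolicVec (m : ℕ) (c : k) (p : ℕ) (s : k) : AdjoinRoot (X ^ m + C c) :=
  root (X ^ m + C c) ^ p + (s / (2 * -(m * c))) • root (X ^ m + C c) ^ (m - p)

variable (c : k)

theorem traceForm_root_pow_hyperbolicVec (hm : 0 < m) {r q : ℕ} (s : k) (hr : r < m)
    (hq : 0 < q) (hqm : 2 * q < m) (hrq : r ≠ q) (hrq' : r + q ≠ m) :
    Algebra.traceForm k _ (root (X ^ m + C c) ^ r) (hyperbolicVec m c q s) = 0 := by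
  rw [hyperbolicVec, map_add, map_smul, traceForm_root_pow_root_pow c hm (by omega),
    traceForm_root_pow_root_pow c hm (by omega)]
  split_ifs <;> first | omega | simp

theorem traceForm_hyperbolicVec (hm : 0 < m) (h2 : (2 : k) ≠ 0) (hmk : (m : k) ≠ 0) (hc : c ≠ 0)
    {p q : ℕ} (s t : k) (hp : 0 < p) (hq : 0 < q) (hpm : 2 * p < m) (hqm : 2 * q < m) :
    Algebra.traceForm k _ (hyperbolicVec m c p s) (hyperbolicVec m c q t)
      = if p = q then (s + t) / 2 else 0 := by
  simp only [hyperbolicVec, map_add, map_smul, LinearMap.add_apply, LinearMap.smul_apply,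
    smul_eq_mul, traceForm_root_pow_root_pow c hm (show p + q < 2 * m by omega),
    traceForm_root_pow_root_pow c hm (show p + (m - q) < 2 * m by omega),
    traceForm_root_pow_root_pow c hm (show m - p + q < 2 * m by omega),
    traceForm_root_pow_root_pow c hm (show m - p + (m - q) < 2 * m by omega)]
  split_ifs <;> first | omega | (field_simp; ring)

variable {c}

theorem traceForm_X_pow_add_C_equivalent_of_odd (h2 : (2 : k) ≠ 0) (hmk : (m : k) ≠ 0)
    (hc : c ≠ 0) (hodd : Odd m) :
    (Algebra.traceForm k (AdjoinRoot (X ^ m + C c))).toQuadraticMap.Equivalent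
      (QuadraticMap.weightedSumSquares k fun i : Fin m =>
        if i.1 = 0 then (m : k) else if Even i.1 then 1 else -1) := by
  have hm : 0 < m := hodd.pos
  have hm2 : m % 2 = 1 := Nat.odd_iff.mp hodd
  have : Invertible (2 : k) := invertibleOfNonzero h2
  have : FiniteDimensional k (AdjoinRoot (X ^ m + C c)) :=
    (powerBasis (X_pow_add_C_ne_zero hm c)).finite
  let v (i : Fin m) : AdjoinRoot (X ^ m + C c) :=
    if i.1 = 0 then root _ ^ 0
    else hyperbolicVec m c ((i + 1) / 2) (if Even i.1 then 1 else -1)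
  have v_zero {i : Fin m} (hi : i.1 = 0) : v i = root _ ^ 0 := if_pos hi
  have v_hyp {i : Fin m} (hi : 1 ≤ i.1) :
      v i = hyperbolicVec m c ((i + 1) / 2) (if Even i.1 then 1 else -1) :=
    if_neg (by omega)
  have gram : ∀ i j : Fin m, Algebra.traceForm k _ (v i) (v j)
      = if i = j then (if i.1 = 0 then (m : k) else if Even i.1 then 1 else -1) else 0 := by
    refine (Algebra.traceForm_isSymm k).apply_eq_ite_of_le fun i j (hij : i.1 ≤ j.1) => ?_
    have hi := i.2
    have hj := j.2
    rcases Nat.eq_zero_or_pos i.1 with hi | hi <;> rcases Nat.eq_zero_or_pos j.1 with hj | hj <;>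
      try omega
    · rw [v_zero hi, v_zero hj, if_pos (Fin.ext (hi.trans hj.symm)), if_pos hi,
        traceForm_root_pow_root_pow c hm (by omega), if_pos rfl]
    · rw [v_zero hi, v_hyp hj, if_neg (Fin.ne_of_val_ne (by omega)),
        traceForm_root_pow_hyperbolicVec c hm _ (by omega) (by omega) (by omega) (by omega)
          (by omega)]
    · rw [v_hyp hi, v_hyp hj, traceForm_hyperbolicVec c hm h2 hmk hc _ _ (by omega) (by omega)
        (by omega) (by omega)]
      simp only [Fin.ext_iff, Nat.even_iff, if_neg (show i.1 ≠ 0 by omega)]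
      split_ifs <;> first | omega | norm_num [neg_div, h2]
  refine LinearMap.BilinForm.equivalent_weightedSumSquares_of_apply_eq_ite
    (Algebra.traceForm_isSymm k) gram (fun i => by split_ifs <;> simp [hmk]) ?_
  rw [Fintype.card_fin, finrank_X_pow_add_C c hm]

theorem traceForm_X_pow_add_C_equivalent_of_even (h2 : (2 : k) ≠ 0) (hmk : (m : k) ≠ 0)
    (hc : c ≠ 0) (heven : Even m) {d : k} (hd : d ≠ 0) :
    (Algebra.traceForm k (AdjoinRoot (X ^ m + C c))).toQuadraticMap.Equivalent
      (QuadraticMap.weightedSumSquares k fun i : Fin m =>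
        if i.1 = 0 then (m : k) else if i.1 = 1 then -(m * c * d ^ 2)
        else if Even i.1 then 1 else -1) := by
  have hm : 0 < m := Nat.pos_of_ne_zero fun h => hmk (by simp [h])
  have hm2 : m % 2 = 0 := Nat.even_iff.mp heven
  have : Invertible (2 : k) := invertibleOfNonzero h2
  have : FiniteDimensional k (AdjoinRoot (X ^ m + C c)) :=
    (powerBasis (X_pow_add_C_ne_zero hm c)).finite
  let v (i : Fin m) : AdjoinRoot (X ^ m + C c) :=
    if i.1 = 0 then root _ ^ 0 else if i.1 = 1 then d • root _ ^ (m / 2)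
    else hyperbolicVec m c (i / 2) (if Even i.1 then 1 else -1)
  have v_zero {i : Fin m} (hi : i.1 = 0) : v i = root _ ^ 0 := if_pos hi
  have v_one {i : Fin m} (hi : i.1 = 1) : v i = d • root _ ^ (m / 2) := by simp [v, hi]
  have v_hyp {i : Fin m} (hi : 2 ≤ i.1) :
      v i = hyperbolicVec m c (i / 2) (if Even i.1 then 1 else -1) := by
    simp only [v, if_neg (show i.1 ≠ 0 by omega), if_neg (show i.1 ≠ 1 by omega)]
  have gram : ∀ i j : Fin m, Algebra.traceForm k _ (v i) (v j)
      = if i = j then (if i.1 = 0 then (m : k) else if i.1 = 1 then -(m * c * d ^ 2)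
        else if Even i.1 then 1 else -1) else 0 := by
    refine (Algebra.traceForm_isSymm k).apply_eq_ite_of_le fun i j (hij : i.1 ≤ j.1) => ?_
    have hi := i.2
    have hj := j.2
    rcases (by omega : i.1 = 0 ∨ i.1 = 1 ∨ 2 ≤ i.1) with hi | hi | hi <;>
    rcases (by omega : j.1 = 0 ∨ j.1 = 1 ∨ 2 ≤ j.1) with hj | hj | hj <;>
      try omega
    · rw [v_zero hi, v_zero hj, if_pos (Fin.ext (hi.trans hj.symm)), if_pos hi,
        traceForm_root_pow_root_pow c hm (by omega), if_pos rfl]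
    · rw [v_zero hi, v_one hj, if_neg (Fin.ne_of_val_ne (by omega)), map_smul,
        traceForm_root_pow_root_pow c hm (by omega), if_neg (by omega), if_neg (by omega),
        smul_zero]
    · rw [v_zero hi, v_hyp hj, if_neg (Fin.ne_of_val_ne (by omega)),
        traceForm_root_pow_hyperbolicVec c hm _ (by omega) (by omega) (by omega) (by omega)
          (by omega)]
    · rw [v_one hi, v_one hj, if_pos (Fin.ext (hi.trans hj.symm)), if_neg (by omega), if_pos hi,
        map_smul, map_smul, LinearMap.smul_apply, traceForm_root_pow_root_pow c hm (by omega),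
        if_neg (by omega), if_pos (by omega), smul_eq_mul, smul_eq_mul]
      ring
    · rw [v_one hi, v_hyp hj, if_neg (Fin.ne_of_val_ne (by omega)), map_smul,
        LinearMap.smul_apply, traceForm_root_pow_hyperbolicVec c hm _ (by omega) (by omega)
          (by omega) (by omega) (by omega), smul_zero]
    · rw [v_hyp hi, v_hyp hj, traceForm_hyperbolicVec c hm h2 hmk hc _ _ (by omega) (by omega)
        (by omega) (by omega)]
      simp only [Fin.ext_iff, Nat.even_iff, if_neg (show i.1 ≠ 0 by omega),
        if_neg (show i.1 ≠ 1 by omega)]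
      split_ifs <;> first | omega | norm_num [neg_div, h2]
  refine LinearMap.BilinForm.equivalent_weightedSumSquares_of_apply_eq_ite
    (Algebra.traceForm_isSymm k) gram (fun i => by split_ifs <;> simp [hmk, hc, hd]) ?_
  rw [Fintype.card_fin, finrank_X_pow_add_C c hm]

end AdjoinRoot

open Polynomial in
theorem statement17_general {k : Type*} [Field k] (hchar : ringChar k ≠ 2)
    (m : ℕ) (hmk : (m : k) ≠ 0) (a b : kˣ)
    (A : Type*) [CommRing A] [Algebra k A]
    (hA : Nonempty (A ≃ₐ[k] AdjoinRoot (X ^ m + C ((b : k) / (a : k))))) :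
    (Odd m →
      QuadraticMap.Equivalent
        ((Algebra.traceForm k A).toQuadraticMap)
        (QuadraticMap.weightedSumSquares k
          (fun i : Fin m => if i.1 = 0 then (m : k) else if Even i.1 then 1 else -1))) ∧
    (Even m →
      QuadraticMap.Equivalent
        ((Algebra.traceForm k A).toQuadraticMap)
        (QuadraticMap.weightedSumSquares k
          (fun i : Fin m => if i.1 = 0 then (m : k)
            else if i.1 = 1 then -((m : k) * (a : k) * (b : k))
            else if Even i.1 then 1 else -1))) := by
  obtain ⟨e⟩ := hA
  have h2 : (2 : k) ≠ 0 := Ring.two_ne_zero hchar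
  have hc : (b : k) / a ≠ 0 := div_ne_zero b.ne_zero a.ne_zero
  have he := Algebra.traceForm_equivalent_of_algEquiv e
  refine ⟨fun hodd => he.trans ?_, fun heven => he.trans ?_⟩
  · exact AdjoinRoot.traceForm_X_pow_add_C_equivalent_of_odd h2 hmk hc hodd
  · convert AdjoinRoot.traceForm_X_pow_add_C_equivalent_of_even h2 hmk hc heven a.ne_zero using 4
    field_simp

open Polynomial in
/-- Let `k` be a field of characteristic `≠ 2`, `m ≥ 2` an integer coprime to `char k`,
`a, b ∈ kˣ`, and `A = k[T]/(T^m + b/a)`. Then the trace form `x ↦ Tr_{A/k}(x²)` is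
`⟨m⟩ + ((m-1)/2)·h` in `GW(k)` if `m` is odd, and `⟨m⟩ + ⟨-mab⟩ + ((m-2)/2)·h` if `m` is
even; equality in `GW(k)` is expressed as an equivalence of quadratic forms with the
corresponding diagonal quadratic form (`h = ⟨1⟩ + ⟨-1⟩` contributing weight pairs
`1, -1`). -/
theorem statement17 {k : Type*} [Field k] (hchar : ringChar k ≠ 2)
    (m : ℕ) (hm : 2 ≤ m) (hmk : (m : k) ≠ 0) (a b : kˣ)
    (A : Type*) [CommRing A] [Algebra k A]
    (hA : Nonempty (A ≃ₐ[k] AdjoinRoot (X ^ m + C ((b : k) / (a : k))))) :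
    (Odd m →
      QuadraticMap.Equivalent
        ((Algebra.traceForm k A).toQuadraticMap)
        (QuadraticMap.weightedSumSquares k
          (fun i : Fin m => if i.1 = 0 then (m : k) else if Even i.1 then 1 else -1))) ∧
    (Even m →
      QuadraticMap.Equivalent
        ((Algebra.traceForm k A).toQuadraticMap)
        (QuadraticMap.weightedSumSquares k
          (fun i : Fin m => if i.1 = 0 then (m : k)
            else if i.1 = 1 then -((m : k) * (a : k) * (b : k))
            else if Even i.1 then 1 else -1))) :=
  statement17_general hchar m hmk a b A hA
end
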